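/- Let Λ > 0 and r₀ > 0 with Λr₀² < 1, take the extremal parameters m = 2r₀(1 - 2Λr₀²/3) and Q² = r₀²(1 - Λr₀²), and let Φ(r) = 1 - m/r - Λr²/3 + Q²/r². Then r_c := -r₀ + √(3/Λ - 2r₀²) satisfies r_c > 0 and Φ(r_c) = 0, and moreover r_c > r₀ if and only if Λr₀² < 1/2, r_c = r₀ if and only if Λr₀² = 1/2, and r_c < r₀ if and only if Λr₀² > 1/2. -/

import Mathlib

/-!
Clearing denominators, `r² Φ(r) = -(Λ/3) (r - r₀)² ((r + r₀)² - (3/Λ - 2 r₀²))` for the extremal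
parameters, so the double root `r₀` leaves the quadratic factor, whose positive root is `r_c`.
Comparing `r_c` with `r₀` amounts to comparing `√(3/Λ - 2r₀²)` with `2r₀`, i.e. `3/Λ` with `6 r₀²`.
-/

theorem extremal_RNdS_metric_eq_factored {Λ r₀ r : ℝ} (hΛ : Λ ≠ 0) (hr : r ≠ 0) :
    1 - 2 * r₀ * (1 - 2 * Λ * r₀ ^ 2 / 3) / r - Λ * r ^ 2 / 3 + r₀ ^ 2 * (1 - Λ * r₀ ^ 2) / r ^ 2
      = -(Λ / 3) * (r - r₀) ^ 2 * ((r + r₀) ^ 2 - (3 / Λ - 2 * r₀ ^ 2)) / r ^ 2 := by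
  field_simp
  ring

theorem lt_iff_and_eq_iff_and_gt_iff_of_sub_eq_pos_mul {x y u v c : ℝ} (hc : 0 < c)
    (h : x - y = c * (u - v)) : (y < x ↔ v < u) ∧ (x = y ↔ v = u) ∧ (x < y ↔ u < v) := by
  refine ⟨?_, ?_, ?_⟩
  · rw [← sub_pos, h, mul_pos_iff_of_pos_left hc, sub_pos]
  · rw [← sub_eq_zero, h, mul_eq_zero, or_iff_right hc.ne', sub_eq_zero, eq_comm]
  · rw [← sub_pos, show y - x = c * (v - u) by linear_combination -h, mul_pos_iff_of_pos_left hc,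
      sub_pos]

theorem extremal_RNdS_third_horizon (Λ r₀ : ℝ) (hΛ : 0 < Λ) (hr₀ : 0 < r₀)
    (h1 : Λ * r₀ ^ 2 < 1) (m Q : ℝ)
    (hm : m = 2 * r₀ * (1 - 2 * Λ * r₀ ^ 2 / 3))
    (hQ : Q ^ 2 = r₀ ^ 2 * (1 - Λ * r₀ ^ 2))
    (rc : ℝ) (hrc : rc = -r₀ + Real.sqrt (3 / Λ - 2 * r₀ ^ 2)) :
    0 < rc ∧
    (1 - m / rc - Λ * rc ^ 2 / 3 + Q ^ 2 / rc ^ 2 = 0) ∧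
    (r₀ < rc ↔ Λ * r₀ ^ 2 < 1 / 2) ∧
    (rc = r₀ ↔ Λ * r₀ ^ 2 = 1 / 2) ∧
    (rc < r₀ ↔ 1 / 2 < Λ * r₀ ^ 2) := by
  set s := √(3 / Λ - 2 * r₀ ^ 2)
  have hrad : r₀ ^ 2 < 3 / Λ - 2 * r₀ ^ 2 := by
    rw [lt_sub_iff_add_lt, lt_div_iff₀ hΛ]
    linarith
  have hs : r₀ < s := (Real.lt_sqrt hr₀.le).2 hrad
  have hs2 : s ^ 2 = 3 / Λ - 2 * r₀ ^ 2 := Real.sq_sqrt (by nlinarith)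
  have hpos : 0 < rc := by linarith
  have hroot : rc + r₀ = s := by rw [hrc]; ring
  have hgap : rc - r₀ = 6 / Λ / (s + 2 * r₀) * (1 / 2 - Λ * r₀ ^ 2) := by
    have hsum : s + 2 * r₀ ≠ 0 := by positivity
    rw [div_mul_eq_mul_div, eq_div_iff hsum]
    have hΛs2 : Λ * s ^ 2 = 3 - 2 * Λ * r₀ ^ 2 := by rw [hs2]; field_simp
    field_simp
    linear_combination 2 * Λ * (s + 2 * r₀) * hroot + 2 * hΛs2
  refine ⟨hpos, ?_, lt_iff_and_eq_iff_and_gt_iff_of_sub_eq_pos_mul (by positivity) hgap⟩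
  rw [hm, hQ, extremal_RNdS_metric_eq_factored hΛ.ne' hpos.ne', hroot, hs2, sub_self, mul_zero,
    zero_div]
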